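/- arXiv:1309.5508 — 2 statements merged into one kernel-verified Lean document; each statement's English description precedes it below -/
import Mathlib

section
/- Let x* be feasible for the vector quadratic fractional problem (VQFP) with each constraint h_j convex and differentiable. Suppose there exist τ ∈ ℝᵐ with τ > 0 componentwise and λ ∈ ℝ^ℓ with λ ≥ 0 componentwise such that Σᵢ τ_i ∇(f_i/g_i)(x*) + Σⱼ λ_j ∇h_j(x*) = 0 and Σⱼ λ_j h_j(x*) = 0. If for all feasible x, Σᵢ τ_i · s_i(x,x*)/u_i(x,x*) ≥ 0 (with u_i, s_i as in the fractional increment identity), then x* is a Pareto optimal solution of (VQFP): there is no feasible x with f_i(x)/g_i(x) ≤ f_i(x*)/g_i(x*) for all i and strict inequality for some i. -/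
/-!
If a feasible `x` dominated `x*`, the weighted sum `∑ τᵢ (Fᵢ x - Fᵢ x*) · gᵢ x / gᵢ x*` of the
rescaled increments of the ratios `Fᵢ = fᵢ / gᵢ` would be negative. Since quadratics equal their
second-order Taylor expansion, this sum splits exactly into the gradient term
`(∑ τᵢ ∇Fᵢ x*) ⬝ (x - x*)` and the remainder `∑ τᵢ sᵢ / uᵢ`. By stationarity, convexity of the `hⱼ`
and complementary slackness the gradient term is `-(∑ λⱼ ∇hⱼ x*) ⬝ (x - x*) ≥ -∑ λⱼ hⱼ x ≥ 0`,
and the remainder is nonnegative by hypothesis: a contradiction.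
-/

open Matrix

theorem Matrix.IsSymm.dotProduct_mulVec_comm {ι R : Type*} [Fintype ι] [CommSemiring R]
    {M : Matrix ι ι R} (hM : M.IsSymm) (x y : ι → R) :
    x ⬝ᵥ M *ᵥ y = y ⬝ᵥ M *ᵥ x := by
  rw [dotProduct_mulVec, ← mulVec_transpose, hM.eq, dotProduct_comm]

theorem Matrix.IsSymm.quadratic_eq_add_grad {ι R : Type*} [Fintype ι] [CommRing R]
    {M : Matrix ι ι R} (hM : M.IsSymm) (c : ι → R) (c₀ : R) (x y : ι → R) :
    x ⬝ᵥ M *ᵥ x + c ⬝ᵥ x + c₀ =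
      (y ⬝ᵥ M *ᵥ y + c ⬝ᵥ y + c₀) + ((2 : R) • (M *ᵥ y) + c) ⬝ᵥ (x - y)
        + (x - y) ⬝ᵥ M *ᵥ (x - y) := by
  obtain ⟨d, rfl⟩ : ∃ d, x = y + d := ⟨x - y, by abel⟩
  rw [add_sub_cancel_left]
  simp only [mulVec_add, dotProduct_add, add_dotProduct, smul_dotProduct, smul_eq_mul,
    dotProduct_comm (M *ᵥ y), hM.dotProduct_mulVec_comm y d]
  ring

theorem div_sub_div_mul_div_eq_of_eq_add {K : Type*} [Field K] {f₀ g₀ f₁ g₁ p r q₁ q₂ : K}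
    (hf : f₁ = f₀ + p + q₁) (hg : g₁ = g₀ + r + q₂) (hg₀ : g₀ ≠ 0) (hg₁ : g₁ ≠ 0) :
    (f₁ / g₁ - f₀ / g₀) * (g₁ / g₀) =
      (g₀ ^ 2)⁻¹ * (g₀ * p - f₀ * r) + (q₁ - f₀ / g₀ * q₂) / g₀ := by
  field_simp
  rw [hf, hg]
  ring

theorem quadratic_div_sub_div_mul_div_eq {ι K : Type*} [Fintype ι] [Field K]
    {A B : Matrix ι ι K} (hA : A.IsSymm) (hB : B.IsSymm) {a b : ι → K} {a₀ b₀ : K}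
    {f g : (ι → K) → K} (hf : ∀ x, f x = x ⬝ᵥ A *ᵥ x + a ⬝ᵥ x + a₀)
    (hg : ∀ x, g x = x ⬝ᵥ B *ᵥ x + b ⬝ᵥ x + b₀) {x y : ι → K} (hgx : g x ≠ 0) (hgy : g y ≠ 0) :
    (f x / g x - f y / g y) * (g x / g y) =
      ((g y ^ 2)⁻¹ • (g y • ((2 : K) • (A *ᵥ y) + a) - f y • ((2 : K) • (B *ᵥ y) + b)))
          ⬝ᵥ (x - y)
        + (x - y) ⬝ᵥ (A - (f y / g y) • B) *ᵥ (x - y) / g y := by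
  have hfxy : f x = f y + ((2 : K) • (A *ᵥ y) + a) ⬝ᵥ (x - y) + (x - y) ⬝ᵥ A *ᵥ (x - y) := by
    rw [hf, hf]; exact hA.quadratic_eq_add_grad a a₀ x y
  have hgxy : g x = g y + ((2 : K) • (B *ᵥ y) + b) ⬝ᵥ (x - y) + (x - y) ⬝ᵥ B *ᵥ (x - y) := by
    rw [hg, hg]; exact hB.quadratic_eq_add_grad b b₀ x y
  rw [div_sub_div_mul_div_eq_of_eq_add hfxy hgxy hgy hgx]
  simp only [smul_dotProduct, sub_dotProduct, sub_mulVec, smul_mulVec, dotProduct_sub,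
    dotProduct_smul, smul_eq_mul]
  ring

theorem sum_smul_dotProduct_sub_nonpos {ι κ : Type*} [Fintype ι] [Fintype κ]
    {h : κ → (ι → ℝ) → ℝ} {grad : κ → ι → ℝ} {lam : κ → ℝ} {x y : ι → ℝ}
    (hconv : ∀ j, grad j ⬝ᵥ (x - y) ≤ h j x - h j y) (hlam : ∀ j, 0 ≤ lam j)
    (hcomp : ∑ j, lam j * h j y = 0) (hx : ∀ j, h j x ≤ 0) :
    (∑ j, lam j • grad j) ⬝ᵥ (x - y) ≤ 0 :=
  calc (∑ j, lam j • grad j) ⬝ᵥ (x - y)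
      ≤ ∑ j, lam j * (h j x - h j y) := by
        rw [sum_dotProduct]
        gcongr with j
        rw [smul_dotProduct, smul_eq_mul]
        exact mul_le_mul_of_nonneg_left (hconv j) (hlam j)
    _ = ∑ j, lam j * h j x := by
        simp only [mul_sub, Finset.sum_sub_distrib, hcomp, sub_zero]
    _ ≤ 0 := Finset.sum_nonpos fun j _ => mul_nonpos_of_nonneg_of_nonpos (hlam j) (hx j)

theorem stmt_3_general {n m ℓ : ℕ}
    (A B : Fin m → Matrix (Fin n) (Fin n) ℝ)
    (a b : Fin m → Fin n → ℝ) (abar bbar : Fin m → ℝ)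
    (hA : ∀ i, (A i).IsSymm) (hB : ∀ i, (B i).PosSemidef)
    (f g : Fin m → (Fin n → ℝ) → ℝ)
    (hf : ∀ i x, f i x = x ⬝ᵥ (A i *ᵥ x) + a i ⬝ᵥ x + abar i)
    (hg : ∀ i x, g i x = x ⬝ᵥ (B i *ᵥ x) + b i ⬝ᵥ x + bbar i)
    (hgpos : ∀ i x, 0 < g i x)
    (h : Fin ℓ → (Fin n → ℝ) → ℝ) (hgrad : Fin ℓ → (Fin n → ℝ) → (Fin n → ℝ))
    (hconv : ∀ j x y, h j x - h j y ≥ (hgrad j y) ⬝ᵥ (x - y))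
    (S : Set (Fin n → ℝ)) (hS : S = {x | ∀ j, h j x ≤ 0})
    (xs : Fin n → ℝ)
    (τ : Fin m → ℝ) (lam : Fin ℓ → ℝ)
    (hτ : ∀ i, 0 < τ i) (hlam : ∀ j, 0 ≤ lam j)
    (hstat : ∑ i, τ i •
        (((g i xs) ^ 2)⁻¹ •
          ((g i xs) • ((2 : ℝ) • (A i *ᵥ xs) + a i) - (f i xs) • ((2 : ℝ) • (B i *ᵥ xs) + b i)))
        + ∑ j, lam j • hgrad j xs = 0)
    (hcomp : ∑ j, lam j * h j xs = 0)
    (hkey : ∀ x ∈ S, 0 ≤ ∑ i, τ i *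
        (((1 / g i x) * ((x - xs) ⬝ᵥ ((A i - (f i xs / g i xs) • B i) *ᵥ (x - xs))))
          / (g i xs / g i x))) :
    ¬ ∃ x ∈ S, (∀ i, f i x / g i x ≤ f i xs / g i xs) ∧
        (∃ i, f i x / g i x < f i xs / g i xs) := by
  rintro ⟨x, hxS, hle, i₀, hlt⟩
  have hfeas : ∀ j, h j x ≤ 0 := by rwa [hS] at hxS
  have hincr i := quadratic_div_sub_div_mul_div_eq (hA i)
    (isHermitian_iff_isSymm.mp (hB i).isHermitian) (hf i) (hg i) (hgpos i x).ne' (hgpos i xs).ne'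
  have hweighted_neg : ∑ i, τ i * ((f i x / g i x - f i xs / g i xs) * (g i x / g i xs)) < 0 :=
    Finset.sum_neg'
      (fun i _ => mul_nonpos_of_nonneg_of_nonpos (hτ i).le <| mul_nonpos_of_nonpos_of_nonneg
        (sub_nonpos.2 (hle i)) (div_pos (hgpos i x) (hgpos i xs)).le)
      ⟨i₀, Finset.mem_univ _, mul_neg_of_pos_of_neg (hτ i₀) <| mul_neg_of_neg_of_pos
        (sub_neg.2 hlt) (div_pos (hgpos i₀ x) (hgpos i₀ xs))⟩
  have hlinear := sum_smul_dotProduct_sub_nonpos (fun j => hconv j x xs) hlam hcomp hfeas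
  have hstat_d := congrArg (· ⬝ᵥ (x - xs)) hstat
  have hrescale i (q : ℝ) : 1 / g i x * q / (g i xs / g i x) = q / g i xs := by
    field_simp [(hgpos i x).ne']
  have hquadratic := hkey x hxS
  simp only [hincr, mul_add, Finset.sum_add_distrib] at hweighted_neg
  simp only [add_dotProduct, sum_dotProduct, smul_dotProduct, smul_eq_mul, zero_dotProduct]
    at hstat_d hlinear hweighted_neg
  simp only [hrescale] at hquadratic
  linarith

theorem stmt_3 {n m ℓ : ℕ}
    (A B : Fin m → Matrix (Fin n) (Fin n) ℝ)
    (a b : Fin m → Fin n → ℝ) (abar bbar : Fin m → ℝ)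
    (hA : ∀ i, (A i).IsSymm) (hB : ∀ i, (B i).PosSemidef)
    (f g : Fin m → (Fin n → ℝ) → ℝ)
    (hf : ∀ i x, f i x = x ⬝ᵥ (A i *ᵥ x) + a i ⬝ᵥ x + abar i)
    (hg : ∀ i x, g i x = x ⬝ᵥ (B i *ᵥ x) + b i ⬝ᵥ x + bbar i)
    (hgpos : ∀ i x, 0 < g i x)
    (h : Fin ℓ → (Fin n → ℝ) → ℝ) (hgrad : Fin ℓ → (Fin n → ℝ) → (Fin n → ℝ))
    (hconv : ∀ j x y, h j x - h j y ≥ (hgrad j y) ⬝ᵥ (x - y))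
    (S : Set (Fin n → ℝ)) (hS : S = {x | ∀ j, h j x ≤ 0})
    (xs : Fin n → ℝ) (hxs : xs ∈ S)
    (τ : Fin m → ℝ) (lam : Fin ℓ → ℝ)
    (hτ : ∀ i, 0 < τ i) (hlam : ∀ j, 0 ≤ lam j)
    (hstat : ∑ i, τ i •
        (((g i xs) ^ 2)⁻¹ •
          ((g i xs) • ((2 : ℝ) • (A i *ᵥ xs) + a i) - (f i xs) • ((2 : ℝ) • (B i *ᵥ xs) + b i)))
        + ∑ j, lam j • hgrad j xs = 0)
    (hcomp : ∑ j, lam j * h j xs = 0)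
    (hkey : ∀ x ∈ S, 0 ≤ ∑ i, τ i *
        (((1 / g i x) * ((x - xs) ⬝ᵥ ((A i - (f i xs / g i xs) • B i) *ᵥ (x - xs))))
          / (g i xs / g i x))) :
    ¬ ∃ x ∈ S, (∀ i, f i x / g i x ≤ f i xs / g i xs) ∧
        (∃ i, f i x / g i x < f i xs / g i xs) :=
  stmt_3_general A B a b abar bbar hA hB f g hf hg hgpos h hgrad hconv S hS xs τ lam hτ hlam hstat
    hcomp hkey
end

section
/- (Converse duality) Let (u*, τ*, λ*) be dual-feasible: Σᵢ τ*_i (∇f_i(u*) - (f_i(u*)/g_i(u*))∇g_i(u*)) + Σⱼ λ*_j ∇h_j(u*) = 0, Σⱼ λ*_j h_j(u*) ≥ 0, τ* > 0, λ* ≥ 0; and suppose u* is also primal-feasible: h_j(u*) ≤ 0 for all j. If Σᵢ τ*_i [A_i - (f_i(u*)/g_i(u*))B_i] is positive semidefinite and each h_j is convex, then u* is Pareto optimal for the vector quadratic fractional problem. -/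
/-!
Put `r i = f i u / g i u` and `φ i = f i - r i * g i`, so that `φ i u = 0`. A feasible `x`
dominating `u` makes `φ i x ≤ 0` for all `i`, strictly for some, hence `∑ τ i * φ i x < 0`.
On the other hand, `∑ τ i * φ i` is a quadratic whose exact second-order expansion at `u` has
gradient `-∑ λ j • ∇h j u` (stationarity) and a positive semidefinite Hessian part; the
subgradient inequalities for the `h j`, `λ ≥ 0`, feasibility of `x` and `∑ λ j * h j u ≥ 0`
make the gradient term nonnegative, so `∑ τ i * φ i x ≥ 0`.
-/

open Matrix

section Expansion

variable {ι R : Type*} [Fintype ι] [CommRing R]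

theorem Matrix.IsSymm.dotProduct_mulVec_comm_s16 {A : Matrix ι ι R} (hA : A.IsSymm) (x y : ι → R) :
    x ⬝ᵥ (A *ᵥ y) = y ⬝ᵥ (A *ᵥ x) := by
  rw [dotProduct_mulVec, ← hA.eq, vecMul_transpose, dotProduct_comm, hA.eq]

theorem Matrix.IsSymm.quadratic_sub_quadratic {A : Matrix ι ι R} (hA : A.IsSymm)
    (a : ι → R) (c : R) (x u : ι → R) :
    (x ⬝ᵥ (A *ᵥ x) + a ⬝ᵥ x + c) - (u ⬝ᵥ (A *ᵥ u) + a ⬝ᵥ u + c) =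
      ((2 : R) • (A *ᵥ u) + a) ⬝ᵥ (x - u) + (x - u) ⬝ᵥ (A *ᵥ (x - u)) := by
  have hxu := hA.dotProduct_mulVec_comm_s16 x u
  simp only [mulVec_sub, dotProduct_sub, sub_dotProduct, add_dotProduct, smul_dotProduct,
    smul_eq_mul, dotProduct_comm (A *ᵥ u)]
  ring_nf
  linear_combination (-1 : R) * hxu

theorem sub_mul_quadratic_expansion {A B : Matrix ι ι R} (hA : A.IsSymm) (hB : B.IsSymm)
    {a b : ι → R} {α β : R} {f g : (ι → R) → R}
    (hf : ∀ x, f x = x ⬝ᵥ (A *ᵥ x) + a ⬝ᵥ x + α) (hg : ∀ x, g x = x ⬝ᵥ (B *ᵥ x) + b ⬝ᵥ x + β)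
    (r : R) (x u : ι → R) :
    (f x - r * g x) - (f u - r * g u) =
      (((2 : R) • (A *ᵥ u) + a) - r • ((2 : R) • (B *ᵥ u) + b)) ⬝ᵥ (x - u)
        + (x - u) ⬝ᵥ ((A - r • B) *ᵥ (x - u)) := by
  have hfx := hA.quadratic_sub_quadratic a α x u
  have hgx := hB.quadratic_sub_quadratic b β x u
  rw [hf, hf, hg, hg, sub_dotProduct, smul_dotProduct, smul_eq_mul, sub_mulVec, smul_mulVec,
    dotProduct_sub (x - u), dotProduct_smul, smul_eq_mul]
  linear_combination hfx - r * hgx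

theorem sum_mul_dotProduct_add_dotProduct_mulVec {κ : Type*} (s : Finset κ) (τ : κ → R)
    (ξ : κ → ι → R) (M : κ → Matrix ι ι R) (d : ι → R) :
    ∑ k ∈ s, τ k * (ξ k ⬝ᵥ d + d ⬝ᵥ (M k *ᵥ d)) =
      (∑ k ∈ s, τ k • ξ k) ⬝ᵥ d + d ⬝ᵥ ((∑ k ∈ s, τ k • M k) *ᵥ d) := by
  simp only [sum_dotProduct, sum_mulVec, dotProduct_sum, smul_dotProduct, smul_mulVec,
    dotProduct_smul, smul_eq_mul, mul_add, Finset.sum_add_distrib]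

end Expansion

section Inequalities

variable {κ 𝕜 : Type*} [Fintype κ] [Field 𝕜] [LinearOrder 𝕜] [IsStrictOrderedRing 𝕜]

theorem sum_mul_sub_mul_neg_of_div_lt {F G r τ : κ → 𝕜} (hG : ∀ k, 0 < G k)
    (hτ : ∀ k, 0 < τ k) (hlt : (fun k => F k / G k) < r) :
    ∑ k, τ k * (F k - r k * G k) < 0 := by
  obtain ⟨hle, k, hk⟩ := Pi.lt_def.mp hlt
  have hterm : ∀ k, τ k * (F k - r k * G k) ≤ 0 := fun k =>
    mul_nonpos_of_nonneg_of_nonpos (hτ k).le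
      (sub_nonpos.mpr ((div_le_iff₀ (hG k)).mp (hle k)))
  have hk' : τ k * (F k - r k * G k) < 0 :=
    mul_neg_of_pos_of_neg (hτ k) (sub_neg.mpr ((div_lt_iff₀ (hG k)).mp hk))
  simpa using Finset.sum_lt_sum (fun k _ => hterm k) ⟨k, Finset.mem_univ k, hk'⟩

theorem sum_smul_subgradient_dotProduct_nonpos {ι : Type*} [Fintype ι]
    {h : κ → (ι → 𝕜) → 𝕜} {hgrad : κ → (ι → 𝕜) → (ι → 𝕜)} {lam : κ → 𝕜} {x u : ι → 𝕜}
    (hsub : ∀ j, hgrad j u ⬝ᵥ (x - u) ≤ h j x - h j u) (hlam : ∀ j, 0 ≤ lam j)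
    (hx : ∀ j, h j x ≤ 0) (hcomp : 0 ≤ ∑ j, lam j * h j u) :
    (∑ j, lam j • hgrad j u) ⬝ᵥ (x - u) ≤ 0 := by
  have hlin : ∑ j, lam j * (hgrad j u ⬝ᵥ (x - u)) ≤ ∑ j, lam j * (h j x - h j u) :=
    Finset.sum_le_sum fun j _ => mul_le_mul_of_nonneg_left (hsub j) (hlam j)
  have hfeas : ∑ j, lam j * h j x ≤ 0 :=
    Finset.sum_nonpos fun j _ => mul_nonpos_of_nonneg_of_nonpos (hlam j) (hx j)
  simp only [sum_dotProduct, smul_dotProduct, smul_eq_mul, mul_sub, Finset.sum_sub_distrib]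
    at hlin ⊢
  linarith

end Inequalities

theorem stmt_16_general {n m ℓ : ℕ}
    (A B : Fin m → Matrix (Fin n) (Fin n) ℝ)
    (a b : Fin m → Fin n → ℝ) (abar bbar : Fin m → ℝ)
    (hA : ∀ i, (A i).IsSymm) (hB : ∀ i, (B i).PosSemidef)
    (f g : Fin m → (Fin n → ℝ) → ℝ)
    (hf : ∀ i x, f i x = x ⬝ᵥ (A i *ᵥ x) + a i ⬝ᵥ x + abar i)
    (hg : ∀ i x, g i x = x ⬝ᵥ (B i *ᵥ x) + b i ⬝ᵥ x + bbar i)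
    (hgpos : ∀ i x, 0 < g i x)
    (h : Fin ℓ → (Fin n → ℝ) → ℝ) (hgrad : Fin ℓ → (Fin n → ℝ) → (Fin n → ℝ))
    (hconv : ∀ j x y, h j x - h j y ≥ (hgrad j y) ⬝ᵥ (x - y))
    (u : Fin n → ℝ)
    (τ : Fin m → ℝ) (lam : Fin ℓ → ℝ)
    (hτ : ∀ i, 0 < τ i) (hlam : ∀ j, 0 ≤ lam j)
    (hstat : ∑ i, τ i •
        (((2 : ℝ) • (A i *ᵥ u) + a i) - (f i u / g i u) • ((2 : ℝ) • (B i *ᵥ u) + b i))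
        + ∑ j, lam j • hgrad j u = 0)
    (hcomp : 0 ≤ ∑ j, lam j * h j u)
    (hpsd : ∀ v : Fin n → ℝ,
      0 ≤ v ⬝ᵥ ((∑ i, τ i • (A i - (f i u / g i u) • B i)) *ᵥ v)) :
    ¬ ∃ x, (∀ j, h j x ≤ 0) ∧ (∀ i, f i x / g i x ≤ f i u / g i u) ∧
        (fun i => f i x / g i x) ≠ (fun i => f i u / g i u) := by
  rintro ⟨x, hx, hle, hne⟩
  have hBsymm : ∀ i, (B i).IsSymm := fun i => isHermitian_iff_isSymm.mp (hB i).isHermitian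
  have hneg := sum_mul_sub_mul_neg_of_div_lt (fun i => hgpos i x) hτ (lt_of_le_of_ne hle hne)
  have hgap : ∀ i, f i x - f i u / g i u * g i x =
      (f i x - f i u / g i u * g i x) - (f i u - f i u / g i u * g i u) := fun i => by
    rw [div_mul_cancel₀ _ (hgpos i u).ne', sub_self, sub_zero]
  rw [Finset.sum_congr rfl fun i _ => by rw [hgap i, sub_mul_quadratic_expansion (hA i) (hBsymm i)
    (hf i) (hg i)],
    sum_mul_dotProduct_add_dotProduct_mulVec, eq_neg_of_add_eq_zero_left hstat,
    neg_dotProduct] at hneg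
  linarith [hpsd (x - u), sum_smul_subgradient_dotProduct_nonpos (hconv · x u) hlam hx hcomp]

theorem stmt_16 {n m ℓ : ℕ}
    (A B : Fin m → Matrix (Fin n) (Fin n) ℝ)
    (a b : Fin m → Fin n → ℝ) (abar bbar : Fin m → ℝ)
    (hA : ∀ i, (A i).IsSymm) (hB : ∀ i, (B i).PosSemidef)
    (f g : Fin m → (Fin n → ℝ) → ℝ)
    (hf : ∀ i x, f i x = x ⬝ᵥ (A i *ᵥ x) + a i ⬝ᵥ x + abar i)
    (hg : ∀ i x, g i x = x ⬝ᵥ (B i *ᵥ x) + b i ⬝ᵥ x + bbar i)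
    (hgpos : ∀ i x, 0 < g i x)
    (h : Fin ℓ → (Fin n → ℝ) → ℝ) (hgrad : Fin ℓ → (Fin n → ℝ) → (Fin n → ℝ))
    (hconv : ∀ j x y, h j x - h j y ≥ (hgrad j y) ⬝ᵥ (x - y))
    (u : Fin n → ℝ) (hu : ∀ j, h j u ≤ 0)
    (τ : Fin m → ℝ) (lam : Fin ℓ → ℝ)
    (hτ : ∀ i, 0 < τ i) (hlam : ∀ j, 0 ≤ lam j)
    (hstat : ∑ i, τ i •
        (((2 : ℝ) • (A i *ᵥ u) + a i) - (f i u / g i u) • ((2 : ℝ) • (B i *ᵥ u) + b i))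
        + ∑ j, lam j • hgrad j u = 0)
    (hcomp : 0 ≤ ∑ j, lam j * h j u)
    (hpsd : ∀ v : Fin n → ℝ,
      0 ≤ v ⬝ᵥ ((∑ i, τ i • (A i - (f i u / g i u) • B i)) *ᵥ v)) :
    ¬ ∃ x, (∀ j, h j x ≤ 0) ∧ (∀ i, f i x / g i x ≤ f i u / g i u) ∧
        (fun i => f i x / g i x) ≠ (fun i => f i u / g i u) :=
  stmt_16_general A B a b abar bbar hA hB f g hf hg hgpos h hgrad hconv u τ lam hτ hlam hstat hcomp
    hpsd
end
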